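/- Let k be an algebraically closed field and d ≥ 1 a natural number. There exists a d×d matrix M, all of whose entries are homogeneous polynomials of degree 1 in k[X₀,X₁,X₂,X₃], such that det M = X₀^d + X₁^d + X₂^d + X₃^d. -/

import Mathlib

open MvPolynomial

/-- Scalar factorization: `x^d + y^d` as a product of linear forms. -/
lemma fermat_factor_scalar (k : Type*) [Field k] [IsAlgClosed k] (d : ℕ) (hd : 1 ≤ d) :
    ∃ f : Fin d → k, ∀ x y : k, ∏ i, (x - f i * y) = x ^ d + y ^ d := by
  classical
  set p : Polynomial k := Polynomial.X ^ d + Polynomial.C 1 with hp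
  have hmonic : p.Monic := Polynomial.monic_X_pow_add_C 1 (by omega)
  have hdeg : p.natDegree = d := Polynomial.natDegree_X_pow_add_C
  have hsplit : p.Splits := IsAlgClosed.splits p
  have hcard : Multiset.card p.roots = d := by
    rw [Polynomial.splits_iff_card_roots.mp hsplit, hdeg]
  have hfact : (p.roots.map fun a => Polynomial.X - Polynomial.C a).prod = p :=
    Polynomial.prod_multiset_X_sub_C_of_monic_of_roots_card_eq hmonic (by rw [hcard, hdeg])
  set L : List k := p.roots.toList with hL
  have hlen : L.length = d := by rw [hL, Multiset.length_toList, hcard]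
  refine ⟨fun i => L.get (Fin.cast hlen.symm i), fun x y => ?_⟩
  have hprod : ∀ h : k → k, ∏ i : Fin d, h (L.get (Fin.cast hlen.symm i))
      = (p.roots.map h).prod := by
    intro h
    rw [← Multiset.coe_toList p.roots, ← hL, Multiset.map_coe, Multiset.prod_coe,
      ← Fin.prod_univ_fun_getElem L h]
    exact Fintype.prod_equiv (finCongr hlen.symm) (fun i => h (L.get (Fin.cast hlen.symm i)))
      (fun j => h L[(j : ℕ)]) (fun i => rfl)
  rw [hprod (fun c => x - c * y)]
  rcases eq_or_ne y 0 with hy | hy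
  · subst hy
    simp only [mul_zero, sub_zero]
    rw [Multiset.map_const', Multiset.prod_replicate, hcard, zero_pow (by omega), add_zero]
  · have : (p.roots.map fun c => x - c * y).prod
        = (p.roots.map fun c => y * (x / y - c)).prod := by
      congr 1
      apply Multiset.map_congr rfl
      intro c _
      field_simp
    rw [this]
    have : (p.roots.map fun c => y * (x / y - c)).prod
        = y ^ d * (p.roots.map fun c => (x / y - c)).prod := by
      rw [← hcard]
      simp [Multiset.prod_map_mul, Multiset.map_const', Multiset.prod_replicate]
    rw [this]
    have heval : (p.roots.map fun c => (x / y - c)).prod = Polynomial.eval (x / y) p := by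
      conv_rhs => rw [← hfact]
      rw [Polynomial.eval_multiset_prod, Multiset.map_map]
      simp
    rw [heval, hp]
    simp only [Polynomial.eval_add, Polynomial.eval_pow, Polynomial.eval_X, Polynomial.eval_C]
    rw [div_pow, mul_add, mul_one, mul_div_assoc', mul_div_cancel_left₀ _ (pow_ne_zero d hy)]


/-- Lift the scalar factorization to `MvPolynomial`. -/
lemma fermat_factor_poly (k : Type*) [Field k] [IsAlgClosed k] (d : ℕ)
    (f : Fin d → k) (h : ∀ x y : k, ∏ i, (x - f i * y) = x ^ d + y ^ d)
    (u v : Fin 4) :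
    ∏ i, (X u - C (f i) * X v : MvPolynomial (Fin 4) k) = X u ^ d + X v ^ d := by
  apply MvPolynomial.funext
  intro x
  rw [map_prod]
  simp only [map_sub, map_mul, eval_X, eval_C, map_add, map_pow]
  exact h (x u) (x v)

open Fin.NatCast in
/-- Key combinatorial lemma: permutations with `σ i ∈ {i, i+1}` on `Fin d` (cyclically). -/
lemma perm_id_or_rotate {d : ℕ} [NeZero d] (hd : 2 ≤ d) (σ : Equiv.Perm (Fin d))
    (h : ∀ i, σ i = i ∨ σ i = i + 1) : σ = 1 ∨ ∀ i, σ i = i + 1 := by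
  by_cases hid : ∀ i, σ i = i
  · exact Or.inl (Equiv.ext hid)
  · push_neg at hid
    obtain ⟨i₀, hi₀⟩ := hid
    have hi₀' : σ i₀ = i₀ + 1 := (h i₀).resolve_left hi₀
    have hone : (1 : Fin d) ≠ 0 := by
      rw [Ne, Fin.one_eq_zero_iff]
      omega
    have key : ∀ j : ℕ, σ (i₀ + (j : Fin d)) = i₀ + (j : Fin d) + 1 := by
      intro j
      induction j with
      | zero => simpa using hi₀'
      | succ n ih =>
        have hcast : ((n + 1 : ℕ) : Fin d) = (n : Fin d) + 1 := by
          push_cast; ring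
        rw [hcast, ← add_assoc]
        rcases h (i₀ + (n : Fin d) + 1) with h1 | h1
        · exfalso
          have := σ.injective (h1.trans ih.symm)
          have : (1 : Fin d) = 0 := by
            have h2 : i₀ + (n : Fin d) + 1 = i₀ + (n : Fin d) + 0 := by
              rw [add_zero]; exact this
            exact add_left_cancel h2
          exact hone this
        · exact h1
    refine Or.inr fun i => ?_
    have : i = i₀ + ((i - i₀ : Fin d).val : Fin d) := by
      rw [Fin.cast_val_eq_self]
      abel
    rw [this]
    exact key _

/-- Determinant of the cyclic bidiagonal matrix. -/
lemma det_cyclic_bidiagonal {R : Type*} [CommRing R] {d : ℕ} [NeZero d] (hd : 2 ≤ d)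
    (a b : Fin d → R) :
    (Matrix.of fun i j : Fin d => if i = j then a j else if i = j + 1 then b j else 0).det
      = ∏ i, a i + (-1) ^ (d + 1) * ∏ i, b i := by
  obtain ⟨n, rfl⟩ : ∃ n, d = n + 1 := ⟨d - 1, by omega⟩
  have hone : (1 : Fin (n + 1)) ≠ 0 := by
    rw [Ne, Fin.one_eq_zero_iff]
    omega
  have hrot_ne : finRotate (n + 1) ≠ 1 := by
    intro hcon
    have : finRotate (n + 1) 0 = 0 := by rw [hcon]; rfl
    rw [finRotate_succ_apply, zero_add] at this
    exact hone this
  rw [Matrix.det_apply']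
  simp only [Matrix.of_apply]
  rw [← Finset.sum_subset
    (Finset.subset_univ ({1, finRotate (n + 1)} : Finset (Equiv.Perm (Fin (n + 1)))))]
  · rw [Finset.sum_pair (Ne.symm hrot_ne)]
    congr 1
    · simp
    · rw [show Equiv.Perm.sign (finRotate (n + 1)) = (-1 : ℤˣ) ^ n from by rw [sign_finRotate, Nat.add_sub_cancel]]
      have hMb : ∀ i : Fin (n + 1),
          (if finRotate (n + 1) i = i then a i
            else if finRotate (n + 1) i = i + 1 then b i else 0) = b i := by
        intro i
        rw [finRotate_succ_apply]
        have h1 : i + 1 ≠ i := by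
          intro hcon
          exact hone (by calc (1 : Fin (n + 1)) = i + 1 - i := by abel
            _ = i - i := by rw [hcon]
            _ = 0 := by abel)
        simp [h1]
      rw [Finset.prod_congr rfl fun i _ => hMb i]
      have hsign : (((-1 : ℤˣ) ^ n : ℤˣ) : ℤ) = (-1) ^ n := by push_cast; ring
      rw [hsign]
      push_cast
      have h2 : ((-1 : R)) ^ (n + 1 + 1) = (-1) ^ n := by
        rw [pow_succ, pow_succ]
        ring
      rw [h2]
  · intro σ _ hσ
    simp only [Finset.mem_insert, Finset.mem_singleton] at hσ
    push_neg at hσ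
    obtain ⟨hσ1, hσ2⟩ := hσ
    have hn : ¬ ∀ i, σ i = i ∨ σ i = i + 1 := by
      intro hcon
      rcases perm_id_or_rotate (by omega) σ hcon with h | h
      · exact hσ1 h
      · exact hσ2 (Equiv.ext fun i => by rw [h i, finRotate_succ_apply])
    push_neg at hn
    obtain ⟨i, hi1, hi2⟩ := hn
    have hz : (if σ i = i then a i else if σ i = i + 1 then b i else 0) = (0 : R) := by
      simp [hi1, hi2]
    rw [Finset.prod_eq_zero (Finset.mem_univ i) hz, mul_zero]

lemma lin_form_homog {k : Type*} [CommRing k] (c : k) (u v : Fin 4) :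
    (X u - C c * X v : MvPolynomial (Fin 4) k).IsHomogeneous 1 := by
  have h1 : (X u : MvPolynomial (Fin 4) k).IsHomogeneous 1 := isHomogeneous_X _ _
  have h2 : (C c * X v : MvPolynomial (Fin 4) k).IsHomogeneous 1 := by
    simpa using (isHomogeneous_C (Fin 4) c).mul (isHomogeneous_X _ v)
  simpa using h1.sub h2

/-- Over an algebraically closed field, the Fermat surface of degree `d` in `P³`
admits a linear determinantal representation. -/
theorem fermat_surface_linear_determinantal (k : Type*) [Field k]
    [IsAlgClosed k] (d : ℕ) (hd : 1 ≤ d) :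
    ∃ M : Matrix (Fin d) (Fin d) (MvPolynomial (Fin 4) k),
      (∀ i j, (M i j).IsHomogeneous 1) ∧
      M.det = X 0 ^ d + X 1 ^ d + X 2 ^ d + X 3 ^ d := by
  rcases eq_or_lt_of_le hd with h1 | h2
  · -- d = 1
    subst h1
    refine ⟨Matrix.of fun _ _ => X 0 + X 1 + X 2 + X 3, fun i j => ?_, ?_⟩
    · simpa using (((isHomogeneous_X k (0 : Fin 4)).add (isHomogeneous_X k 1)).add
        (isHomogeneous_X k 2)).add (isHomogeneous_X k 3)
    · rw [Matrix.det_fin_one]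
      simp [pow_one]
  · -- 2 ≤ d
    have hd2 : 2 ≤ d := h2
    have : NeZero d := ⟨by omega⟩
    obtain ⟨f, hf⟩ := fermat_factor_scalar k d hd
    obtain ⟨g, hg⟩ := fermat_factor_scalar k d hd
    set s : k := (-1) ^ (d + 1) with hs
    set a : Fin d → MvPolynomial (Fin 4) k := fun i => X 0 - C (f i) * X 1 with ha
    set b : Fin d → MvPolynomial (Fin 4) k :=
      fun i => C (if i = 0 then s else 1) * (X 2 - C (g i) * X 3) with hb
    refine ⟨Matrix.of fun i j => if i = j then a j else if i = j + 1 then b j else 0,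
      fun i j => ?_, ?_⟩
    · simp only [Matrix.of_apply]
      split_ifs with h h'
      · exact lin_form_homog _ _ _
      · exact (by simpa using (isHomogeneous_C (Fin 4) _).mul (lin_form_homog (g j) 2 3))
      · exact isHomogeneous_zero _ _ _
    · rw [det_cyclic_bidiagonal hd2 a b]
      have hA : ∏ i, a i = (X 0 : MvPolynomial (Fin 4) k) ^ d + X 1 ^ d :=
        fermat_factor_poly k d f hf 0 1
      have hB : ∏ i, b i = C s * ((X 2 : MvPolynomial (Fin 4) k) ^ d + X 3 ^ d) := by
        rw [hb, Finset.prod_mul_distrib]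
        congr 1
        · rw [← map_prod]
          congr 1
          simp
        · exact fermat_factor_poly k d g hg 2 3
      rw [hA, hB, hs]
      have hCs : (C ((-1 : k) ^ (d + 1)) : MvPolynomial (Fin 4) k) = (-1) ^ (d + 1) := by
        rw [map_pow, map_neg, map_one]
      rw [hCs, ← mul_assoc, ← pow_add]
      have h2d : (-1 : MvPolynomial (Fin 4) k) ^ (d + 1 + (d + 1)) = 1 := by
        rw [show d + 1 + (d + 1) = 2 * (d + 1) by ring, pow_mul]
        norm_num
      rw [h2d, one_mul]
      ring
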